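/- Let r : I → ℝ be smooth with r > 0, r + c > 0, r(r + 2c) ≠ 0, and suppose r satisfies (r')² = (r + c + c₁)/(r + c) with r' ≠ 0 on I, and also α·K'/K = r''/r' on I where K = -1/(r(r + 2c)). If c₁ ≠ 0 or α ≠ 0, then r satisfies the polynomial identity 4αr³ + (4α(3c + c₁) - c₁)r² + (4α(3c² + 2cc₁) - 2cc₁)r + 4αc²(c + c₁) = 0 on I; consequently, if α ≠ 0, r is constant on I, contradicting r' ≠ 0. Hence no such r exists when α ≠ 0. -/

import Mathlib

private lemma deriv_zero_of_eqOn {I : Set ℝ} (hI : IsOpen I) {g : ℝ → ℝ}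
    (hg : ∀ t ∈ I, g t = 0) {s : ℝ} (hs : s ∈ I) : deriv g s = 0 := by
  have h : g =ᶠ[nhds s] fun _ => (0:ℝ) :=
    Filter.eventuallyEq_of_mem (hI.mem_nhds hs) hg
  simpa using h.deriv_eq

/-- Nonexistence of K^α-translators on linear Weingarten (H = cK) rotational
surfaces: the hypotheses force the cubic polynomial identity in r, hence
(for α ≠ 0) a contradiction. -/
theorem stmt11 (I : Set ℝ) (hI : IsOpen I) (c c₁ α : ℝ)
    (r K : ℝ → ℝ) (hr : ContDiffOn ℝ (⊤ : ℕ∞) r I)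
    (hrpos : ∀ s ∈ I, 0 < r s)
    (hrc : ∀ s ∈ I, 0 < r s + c)
    (hden : ∀ s ∈ I, r s * (r s + 2*c) ≠ 0)
    (hode : ∀ s ∈ I, (deriv r s)^2 = (r s + c + c₁) / (r s + c))
    (hr' : ∀ s ∈ I, deriv r s ≠ 0)
    (hK : ∀ s ∈ I, K s = -1 / (r s * (r s + 2*c)))
    (hlog : ∀ s ∈ I, α * deriv K s / K s = deriv (deriv r) s / deriv r s) :
    ((c₁ ≠ 0 ∨ α ≠ 0) →
      ∀ s ∈ I, 4*α*(r s)^3 + (4*α*(3*c + c₁) - c₁)*(r s)^2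
        + (4*α*(3*c^2 + 2*c*c₁) - 2*c*c₁)*(r s) + 4*α*c^2*(c + c₁) = 0) ∧
    (α ≠ 0 → ∀ s ∈ I, False) := by
  have hdiff : ∀ s ∈ I, HasDerivAt r (deriv r s) s := by
    intro s hs
    exact ((hr.differentiableOn (by simp)).differentiableAt
      (hI.mem_nhds hs)).hasDerivAt
  have hdiff2 : ∀ s ∈ I, HasDerivAt (deriv r) (deriv (deriv r) s) s := by
    intro s hs
    exact (((hr.deriv_of_isOpen hI (WithTop.coe_le_coe.2 le_top)).differentiableOn
      one_ne_zero).differentiableAt (hI.mem_nhds hs)).hasDerivAt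
  -- key cubic identity
  have key : ∀ s ∈ I, 4*α*(r s)^3 + (4*α*(3*c + c₁) - c₁)*(r s)^2
      + (4*α*(3*c^2 + 2*c*c₁) - 2*c*c₁)*(r s) + 4*α*c^2*(c + c₁) = 0 := by
    intro s hs
    set a := r s with ha
    set a' := deriv r s with ha'
    set a'' := deriv (deriv r) s with ha''
    have hu0 : a * (a + 2*c) ≠ 0 := hden s hs
    have hc0 : a + c ≠ 0 := ne_of_gt (hrc s hs)
    have ha'0 : a' ≠ 0 := hr' s hs
    -- derivative of K
    have hu : HasDerivAt (fun t => r t * (r t + 2*c)) (a' * (a + 2*c) + a * a') s :=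
      (hdiff s hs).mul ((hdiff s hs).add_const (2*c))
    have hKd : HasDerivAt (fun t => -1 / (r t * (r t + 2*c)))
        ((0 * (a * (a + 2*c)) - (-1) * (a' * (a + 2*c) + a * a')) / (a * (a + 2*c))^2) s :=
      (hasDerivAt_const s (-1)).div hu hu0
    have hKderiv : deriv K s =
        ((0 * (a * (a + 2*c)) - (-1) * (a' * (a + 2*c) + a * a')) / (a * (a + 2*c))^2) := by
      have hev : K =ᶠ[nhds s] fun t => -1 / (r t * (r t + 2*c)) :=
        Filter.eventuallyEq_of_mem (hI.mem_nhds hs) hK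
      rw [hev.deriv_eq, hKd.deriv]
    -- second derivative relation from the ODE
    have hL : HasDerivAt (fun t => (deriv r t)^2) ((2:ℕ) * a' ^ 1 * a'') s :=
      (hdiff2 s hs).pow 2
    have hR : HasDerivAt (fun t => (r t + c + c₁) / (r t + c))
        ((a' * (a + c) - (a + c + c₁) * a') / (a + c)^2) s :=
      (((hdiff s hs).add_const c).add_const c₁).div ((hdiff s hs).add_const c) hc0
    have hdd : (2:ℕ) * a' ^ 1 * a'' = (a' * (a + c) - (a + c + c₁) * a') / (a + c)^2 := by
      have hev : (fun t => (deriv r t)^2) =ᶠ[nhds s] fun t => (r t + c + c₁) / (r t + c) :=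
        Filter.eventuallyEq_of_mem (hI.mem_nhds hs) hode
      rw [← hL.deriv, hev.deriv_eq, hR.deriv]
    have hdd' : 2 * a' * a'' = -c₁ * a' / (a + c)^2 := by
      rw [show ((2:ℕ) * a' ^ 1 * a'' : ℝ) = 2 * a' * a'' by push_cast; ring] at hdd
      rw [hdd]; field_simp; ring
    have ha''eq : a'' = -c₁ / (2 * (a + c)^2) := by
      have h2 : (2*(a+c)^2 : ℝ) ≠ 0 := by positivity
      rw [eq_div_iff h2]
      have hz : a' * (a'' * (2*(a+c)^2) - (-c₁)) = 0 := by
        field_simp at hdd'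
        linear_combination a' * hdd'
      have := (mul_eq_zero.1 hz).resolve_left ha'0
      linarith
    -- the log equation
    have hlogs := hlog s hs
    rw [hKderiv, hK s hs] at hlogs
    rw [← ha, ← ha', ← ha''] at hlogs
    rw [ha''eq] at hlogs
    have hode' : a'^2 * (a + c) = a + c + c₁ := by
      have := hode s hs
      rw [← ha, ← ha'] at this
      field_simp at this
      linarith [this]
    -- clear denominators in hlogs
    have hKne : (-1 : ℝ) / (a * (a + 2*c)) ≠ 0 := by
      simp [div_eq_iff hu0]
    have hmain : 4*α*(a + c + c₁)*(a + c)^2 = c₁ * (a * (a + 2*c)) := by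
      field_simp at hlogs
      rw [neg_inj, div_eq_iff hu0] at hlogs
      apply mul_right_cancel₀ hu0
      linear_combination (a*(a+2*c)) * (hlogs - 4*α*(a+c)^2 * hode')
    linear_combination hmain
  refine ⟨fun _ => key, ?_⟩
  intro hα s hs
  -- differentiate the cubic identity three times
  have key1 : ∀ t ∈ I, (12*α*(r t)^2 + 2*(4*α*(3*c + c₁) - c₁)*(r t)
      + (4*α*(3*c^2 + 2*c*c₁) - 2*c*c₁)) = 0 := by
    intro t ht
    have hg : HasDerivAt (fun x => 4*α*(r x)^3 + (4*α*(3*c + c₁) - c₁)*(r x)^2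
        + (4*α*(3*c^2 + 2*c*c₁) - 2*c*c₁)*(r x) + 4*α*c^2*(c + c₁))
        ((12*α*(r t)^2 + 2*(4*α*(3*c + c₁) - c₁)*(r t)
          + (4*α*(3*c^2 + 2*c*c₁) - 2*c*c₁)) * deriv r t) t := by
      have h := (((((hdiff t ht).pow 3).const_mul (4*α)).add
        (((hdiff t ht).pow 2).const_mul (4*α*(3*c + c₁) - c₁))).add
        ((hdiff t ht).const_mul (4*α*(3*c^2 + 2*c*c₁) - 2*c*c₁))).add_const (4*α*c^2*(c + c₁))
      convert h using 1
      all_goals try rfl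
      push_cast; norm_num only; ring
    have hz := deriv_zero_of_eqOn hI key ht
    rw [hg.deriv] at hz
    exact (mul_eq_zero.1 hz).resolve_right (hr' t ht)
  have key2 : ∀ t ∈ I, 24*α*(r t) + 2*(4*α*(3*c + c₁) - c₁) = 0 := by
    intro t ht
    have hg : HasDerivAt (fun x => 12*α*(r x)^2 + 2*(4*α*(3*c + c₁) - c₁)*(r x)
        + (4*α*(3*c^2 + 2*c*c₁) - 2*c*c₁))
        ((24*α*(r t) + 2*(4*α*(3*c + c₁) - c₁)) * deriv r t) t := by
      have h := ((((hdiff t ht).pow 2).const_mul (12*α)).add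
        ((hdiff t ht).const_mul (2*(4*α*(3*c + c₁) - c₁)))).add_const
        (4*α*(3*c^2 + 2*c*c₁) - 2*c*c₁)
      convert h using 1
      all_goals try rfl
      push_cast; norm_num only; ring
    have hz := deriv_zero_of_eqOn hI key1 ht
    rw [hg.deriv] at hz
    exact (mul_eq_zero.1 hz).resolve_right (hr' t ht)
  have hg : HasDerivAt (fun x => 24*α*(r x) + 2*(4*α*(3*c + c₁) - c₁))
      (24*α * deriv r s) s := ((hdiff s hs).const_mul (24*α)).add_const _
  have hz := deriv_zero_of_eqOn hI key2 hs
  rw [hg.deriv] at hz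
  rcases mul_eq_zero.1 hz with h | h
  · exact hα (by linarith) |>.elim
  · exact hr' s hs h
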